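/- arXiv:0711.1774 — 6 statements merged into one kernel-verified Lean document; each statement's English description precedes it below -/
import Mathlib

section
/- For q ≤ −4, in the abelian group H₁ = coker(L_{−2,q,1}) presented by the (|q|+5)×(|q|+5) linking matrix with first row (−3,−1,−1,−1,−1,…,−1), second through fourth rows (−1,0,−1,−1,0,…,0), (−1,−1,0,−1,0,…,0), (−1,−1,−1,0,0,…,0), and remaining rows (−1,0,0,0) followed by the block A_{|q|}, one has H₁ ≅ ℤ/(|q|−2), and the class of μ₁ equals (|q|−4) times the generator μ₂. -/
/-- The cokernel `ℤⁿ / M ℤⁿ` of a square integer matrix `M`. -/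
abbrev matrixCoker {n : ℕ} (M : Matrix (Fin n) (Fin n) ℤ) :=
  (Fin n → ℤ) ⧸ LinearMap.range M.mulVecLin

/-- The class `μ_i` of the `i`-th standard basis vector in the cokernel of `M`. -/
def mu {n : ℕ} (M : Matrix (Fin n) (Fin n) ℤ) (i : Fin n) : matrixCoker M :=
  Submodule.Quotient.mk (Pi.single i 1)

/-- The `(|q|+5) × (|q|+5)` linking matrix `L_{-2,q,1}`: first row
`(-3,-1,-1,…,-1)`, rows 2–4 forming the block `A_2` (zero diagonal, `-1` off-diagonal)
each linking the first curve once, and the remaining rows forming the block `A_{|q|}`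
(zero diagonal, `-1` off-diagonal), each linking the first curve once. -/
def L6mat (s : ℕ) : Matrix (Fin (s + 5)) (Fin (s + 5)) ℤ :=
  Matrix.of fun i j =>
    if (i : ℕ) = 0 ∧ (j : ℕ) = 0 then -3
    else if (i : ℕ) = 0 ∨ (j : ℕ) = 0 then -1
    else if (i : ℕ) ≤ 3 ∧ (j : ℕ) ≤ 3 then (if i = j then 0 else -1)
    else if (i : ℕ) ≤ 3 ∨ (j : ℕ) ≤ 3 then 0
    else if i = j then 0 else -1

/-! The columns of `L_{-2,q,1}` read, in the cokernel, `μ₂ = μ₃ = μ₄ = μ₁ + (μ₂ + μ₃ + μ₄)`,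
`μ_j = Σᵢ μᵢ - (μ₂ + μ₃ + μ₄)` for `j` in the `A_{|q|}` block, and `Σᵢ μᵢ = -2 μ₁`. Hence
`μ₁ = -2 μ₂` and every other `μ_j` equals `μ₂`, so `μᵢ = cᵢ μ₂` with `c = (-2, 1, …, 1)`, and
comparing the two expressions `(|q| + 2) μ₂` and `4 μ₂` for `Σᵢ μᵢ` gives `(|q| - 2) μ₂ = 0`.
Conversely `c ⬝ᵥ -` takes the value `0` or `2 - |q|` on every column, so it descends to the
cokernel and identifies it with `ℤ/(|q| - 2)`. -/

open Matrix

section Cokernel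

variable {n : ℕ} (M : Matrix (Fin n) (Fin n) ℤ)

lemma mk_col_eq_zero (j : Fin n) : (Submodule.Quotient.mk (M.col j) : matrixCoker M) = 0 :=
  (Submodule.Quotient.mk_eq_zero _).mpr ⟨Pi.single j 1, M.mulVec_single_one j⟩

lemma mk_eq_sum_smul_mu (v : Fin n → ℤ) :
    (Submodule.Quotient.mk v : matrixCoker M) = ∑ i, v i • mu M i := by
  conv_lhs => rw [← Finset.univ_sum_single v, ← Submodule.mkQ_apply, map_sum]
  simp only [Submodule.mkQ_apply, mu, ← Submodule.Quotient.mk_smul, ← Pi.single_smul',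
    smul_eq_mul, mul_one]

lemma mk_eq_dotProduct_smul {c : Fin n → ℤ} {x : matrixCoker M} (hmu : ∀ i, mu M i = c i • x)
    (v : Fin n → ℤ) : (Submodule.Quotient.mk v : matrixCoker M) = (c ⬝ᵥ v) • x := by
  rw [mk_eq_sum_smul_mu, dotProduct, Finset.sum_smul]
  refine Finset.sum_congr rfl fun i _ => ?_
  rw [hmu i, smul_smul, mul_comm]

/-- The isomorphism is `v ↦ c ⬝ᵥ v mod m`. -/
theorem exists_addEquiv_zmod_of_mu_eq_smul {m : ℕ} (c : Fin n → ℤ) (i₀ : Fin n)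
    (hc : c i₀ = 1) (hmu : ∀ i, mu M i = c i • mu M i₀)
    (hcM : ∀ j, (m : ℤ) ∣ (c ᵥ* M) j) (hord : (m : ℤ) • mu M i₀ = 0) :
    ∃ φ : matrixCoker M ≃+ ZMod m, φ (mu M i₀) = 1 := by
  let f : (Fin n → ℤ) →ₗ[ℤ] ZMod m :=
    ((Int.castAddHom (ZMod m)).comp (dotProductBilin ℤ ℤ c).toAddMonoidHom).toIntLinearMap
  have hf : ∀ v, f v = ((c ⬝ᵥ v : ℤ) : ZMod m) := fun _ => rfl
  have hker : LinearMap.range M.mulVecLin ≤ LinearMap.ker f := by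
    rintro _ ⟨v, rfl⟩
    rw [LinearMap.mem_ker, hf, mulVecLin_apply, dotProduct_mulVec, dotProduct, Int.cast_sum]
    exact Finset.sum_eq_zero fun j _ => by
      rw [Int.cast_mul, (ZMod.intCast_zmod_eq_zero_iff_dvd _ m).mpr (hcM j), zero_mul]
  let φ := (LinearMap.range M.mulVecLin).liftQ f hker
  have hφ : ∀ v, φ (Submodule.Quotient.mk v) = ((c ⬝ᵥ v : ℤ) : ZMod m) := fun _ => rfl
  have hφμ : φ (mu M i₀) = 1 := by simp [mu, hφ, dotProduct_single, hc]
  let ψ : ZMod m →+ matrixCoker M := ZMod.lift m ⟨zmultiplesHom _ (mu M i₀), by simpa using hord⟩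
  have hψ : ∀ k : ℤ, ψ k = k • mu M i₀ := fun k => by simp [ψ, ZMod.lift_coe]
  refine ⟨AddMonoidHom.toAddEquiv φ.toAddMonoidHom ψ ?_ ?_, hφμ⟩
  · ext x
    obtain ⟨v, rfl⟩ := Submodule.Quotient.mk_surjective _ x
    rw [AddMonoidHom.comp_apply, AddMonoidHom.id_apply, LinearMap.toAddMonoidHom_coe, hφ, hψ,
      mk_eq_dotProduct_smul M hmu]
  · ext x
    obtain ⟨k, rfl⟩ := ZMod.intCast_surjective x
    change φ (ψ k) = k
    rw [hψ, map_zsmul, hφμ, zsmul_one]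

end Cokernel

theorem Fin.val_three {n : ℕ} : ((3 : Fin (n + 4)) : ℕ) = 3 := rfl

namespace L6mat

variable (s : ℕ)

def blockA2 : Fin (s + 5) → ℤ := Pi.single 1 1 + Pi.single 2 1 + Pi.single 3 1

lemma col_zero : (L6mat s).col 0 = -1 - 2 • Pi.single 0 1 := by
  ext i
  rw [Pi.sub_apply, Pi.smul_apply]
  simp only [L6mat, of_apply, col_apply, Pi.neg_apply, Pi.one_apply, Pi.single_apply, Fin.ext_iff,
    Fin.val_zero, nsmul_eq_mul, Nat.cast_ofNat, mul_ite, mul_one, mul_zero, and_true, or_true,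
    if_true]
  split_ifs <;> omega

lemma col_of_le_three (j : Fin (s + 5)) (h1 : 1 ≤ (j : ℕ)) (h3 : (j : ℕ) ≤ 3) :
    (L6mat s).col j = Pi.single j 1 - Pi.single 0 1 - blockA2 s := by
  ext i
  simp only [L6mat, of_apply, col_apply, blockA2, Pi.add_apply, Pi.sub_apply, Pi.single_apply,
    Fin.ext_iff, Fin.val_zero, Fin.val_one, Fin.val_two, Fin.val_three]
  split_ifs <;> omega

lemma col_of_four_le (j : Fin (s + 5)) (h4 : 4 ≤ (j : ℕ)) :
    (L6mat s).col j = Pi.single j 1 + blockA2 s - 1 := by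
  ext i
  simp only [L6mat, of_apply, col_apply, blockA2, Pi.add_apply, Pi.sub_apply, Pi.one_apply,
    Pi.single_apply, Fin.ext_iff, Fin.val_one, Fin.val_two, Fin.val_three]
  split_ifs <;> omega

local notation "μ" => mu (L6mat s)

lemma mk_one : (Submodule.Quotient.mk 1 : matrixCoker (L6mat s)) = -2 • μ 0 := by
  have h := mk_col_eq_zero (L6mat s) 0
  rw [col_zero, Submodule.Quotient.mk_sub, Submodule.Quotient.mk_neg, Submodule.Quotient.mk_smul] at h
  rw [mu]
  linear_combination (norm := module) -h

lemma mu_of_le_three (j : Fin (s + 5)) (h1 : 1 ≤ (j : ℕ)) (h3 : (j : ℕ) ≤ 3) :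
    μ j = μ 0 + (μ 1 + μ 2 + μ 3) := by
  have h := mk_col_eq_zero (L6mat s) j
  rw [col_of_le_three s j h1 h3] at h
  simp only [blockA2, Submodule.Quotient.mk_sub, Submodule.Quotient.mk_add] at h
  simp only [mu]
  linear_combination (norm := module) h

lemma mu_of_four_le (j : Fin (s + 5)) (h4 : 4 ≤ (j : ℕ)) :
    μ j = Submodule.Quotient.mk 1 - (μ 1 + μ 2 + μ 3) := by
  have h := mk_col_eq_zero (L6mat s) j
  rw [col_of_four_le s j h4] at h
  simp only [blockA2, Submodule.Quotient.mk_sub, Submodule.Quotient.mk_add] at h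
  simp only [mu]
  linear_combination (norm := module) h

def weight : Fin (s + 5) → ℤ := 1 - 3 • Pi.single 0 1

lemma weight_zero : weight s 0 = -2 := by simp [weight]

lemma weight_of_pos (i : Fin (s + 5)) (hi : 0 < (i : ℕ)) : weight s i = 1 := by
  simp [weight, Fin.ext_iff, hi.ne']

lemma weight_dotProduct_one : weight s ⬝ᵥ 1 = (s : ℤ) + 2 := by
  rw [weight, sub_dotProduct, smul_dotProduct, single_dotProduct, dotProduct_one]
  simp only [Pi.one_apply, Finset.sum_const, Finset.card_univ, Fintype.card_fin, Int.nsmul_eq_mul,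
    Nat.cast_add, Nat.cast_ofNat, mul_one]
  ring

lemma weight_dotProduct_blockA2 : weight s ⬝ᵥ blockA2 s = 3 := by
  simp only [blockA2, dotProduct_add, dotProduct_single, mul_one]
  rw [weight_of_pos s 1 Nat.one_pos, weight_of_pos s 2 (by rw [Fin.val_two]; omega),
    weight_of_pos s 3 (by rw [Fin.val_three]; omega)]
  norm_num

lemma mu_eq_mu_one_of_le_three (j : Fin (s + 5)) (h1 : 1 ≤ (j : ℕ)) (h3 : (j : ℕ) ≤ 3) :
    μ j = μ 1 :=
  (mu_of_le_three s j h1 h3).trans (mu_of_le_three s 1 le_rfl (by rw [Fin.val_one]; omega)).symm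

lemma mu_two : μ 2 = μ 1 :=
  mu_eq_mu_one_of_le_three s 2 (by rw [Fin.val_two]; omega) (by rw [Fin.val_two]; omega)

lemma mu_three : μ 3 = μ 1 :=
  mu_eq_mu_one_of_le_three s 3 (by rw [Fin.val_three]; omega) le_rfl

lemma mu_zero_eq : μ 0 = -2 • μ 1 := by
  have h := mu_of_le_three s 1 le_rfl (by rw [Fin.val_one]; omega)
  rw [mu_two, mu_three] at h
  linear_combination (norm := module) -h

lemma mu_eq_weight_smul (i : Fin (s + 5)) : μ i = weight s i • μ 1 := by
  rcases Nat.eq_zero_or_pos (i : ℕ) with h0 | hpos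
  · obtain rfl : i = 0 := Fin.ext (by simpa using h0)
    rw [weight_zero, mu_zero_eq]
  rw [weight_of_pos s i hpos, one_smul]
  by_cases h3 : (i : ℕ) ≤ 3
  · exact mu_eq_mu_one_of_le_three s i hpos h3
  · rw [mu_of_four_le s i (by omega), mk_one, mu_zero_eq, mu_two, mu_three]
    module

lemma sub_two_smul_mu_one : ((s : ℤ) - 2) • μ 1 = 0 := by
  have h := mk_one s
  rw [mk_eq_dotProduct_smul _ (mu_eq_weight_smul s), weight_dotProduct_one, mu_zero_eq] at h
  linear_combination (norm := module) h

lemma dvd_vecMul_weight (j : Fin (s + 5)) : (s : ℤ) - 2 ∣ (weight s ᵥ* L6mat s) j := by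
  rw [vecMul_apply]
  rcases Nat.eq_zero_or_pos (j : ℕ) with h0 | hpos
  · obtain rfl : j = 0 := Fin.ext (by simpa using h0)
    rw [col_zero, dotProduct_sub, dotProduct_neg, dotProduct_smul, dotProduct_single,
      weight_dotProduct_one, weight_zero]
    exact ⟨-1, by ring⟩
  by_cases h3 : (j : ℕ) ≤ 3
  · rw [col_of_le_three s j hpos h3, dotProduct_sub, dotProduct_sub, dotProduct_single,
      dotProduct_single, weight_dotProduct_blockA2, weight_zero, weight_of_pos s j hpos]
    exact ⟨0, by ring⟩
  · rw [col_of_four_le s j (by omega), dotProduct_sub, dotProduct_add, dotProduct_single,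
      weight_dotProduct_blockA2, weight_dotProduct_one, weight_of_pos s j hpos]
    exact ⟨-1, by ring⟩

lemma mu_zero_eq_sub_four_smul : μ 0 = ((s : ℤ) - 4) • μ 1 := by
  rw [mu_zero_eq]
  linear_combination (norm := module) -sub_two_smul_mu_one s

end L6mat

/-- For `q ≤ -4`, the group `H₁ = coker(L_{-2,q,1})` is isomorphic to `ℤ/(|q|-2)`,
generated by the class of `μ₂`, and `μ₁ = (|q|-4) · μ₂`. -/
theorem coker_L_minustwo_q_one (q : ℤ) (hq : q ≤ -4) :
    ∃ φ : matrixCoker (L6mat q.natAbs) ≃+ ZMod (q.natAbs - 2),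
      φ (mu (L6mat q.natAbs) 1) = 1 ∧
        mu (L6mat q.natAbs) 0 = ((q.natAbs : ℤ) - 4) • mu (L6mat q.natAbs) 1 := by
  have hm : ((q.natAbs - 2 : ℕ) : ℤ) = (q.natAbs : ℤ) - 2 := by omega
  obtain ⟨φ, hφ⟩ := exists_addEquiv_zmod_of_mu_eq_smul (m := q.natAbs - 2) (L6mat q.natAbs)
    (L6mat.weight _) 1 (L6mat.weight_of_pos _ 1 Nat.one_pos) (L6mat.mu_eq_weight_smul _)
    (by rw [hm]; exact L6mat.dvd_vecMul_weight _) (by rw [hm]; exact L6mat.sub_two_smul_mu_one _)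
  exact ⟨φ, hφ, L6mat.mu_zero_eq_sub_four_smul _⟩
end

section
/- Let q ≤ −1 and consider the (|q|+3)×(|q|+3) symmetric integer matrix L_{0,q,−1} with first row (−1,−1,−1,…,−1), second row (−1,0,0,…,0), and lower-right (|q|+1)×(|q|+1) block equal to A_{|q|} (zero diagonal, −1 off-diagonal) in rows/columns 3 through |q|+3, with entries −1 in position (i,1) and (1,i) for all i, and 0 elsewhere in the second row/column beyond position 1. Then the signature of L_{0,q,−1} equals |q| − 1. -/
/-!
On a vector `(a, b, w)` with `w ∈ ℝ^{s+1}`, the quadratic form of `L7mat s` is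
`∑ wₖ² - (a + ∑ wₖ)² - 2ab`. It equals `∑ wₖ² + 2 (∑ wₖ)²` on the `(s+1)`-dimensional subspace
`{(-∑ wₖ, ∑ wₖ, w)}` and `-a² - s(s+1) t²` on the plane `{(a, -(s+1) t, t, …, t)}`. By the spectral
theorem, a subspace on which the form is positive (negative) definite embeds into the span of the
eigenvectors with positive (negative) eigenvalues, so for `s ≥ 1` there are `s + 1` positive and
`2` negative eigenvalues.
-/

/-- The signature of a real symmetric matrix: the number of positive eigenvalues
minus the number of negative eigenvalues. -/
noncomputable def matrixSignature {n : ℕ} (M : Matrix (Fin n) (Fin n) ℝ)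
    (hM : M.IsHermitian) : ℤ :=
  (Nat.card {i : Fin n // 0 < hM.eigenvalues i} : ℤ) -
    (Nat.card {i : Fin n // hM.eigenvalues i < 0} : ℤ)

/-- The `(|q|+3) × (|q|+3)` symmetric matrix `L_{0,q,-1}`: first row all `-1`,
second row `(-1,0,…,0)`, and the lower-right `(|q|+1) × (|q|+1)` block equal to
`A_{|q|}` (zero diagonal, `-1` off-diagonal), each of whose rows has `-1` in the
first column and `0` in the second. -/
def L7mat (s : ℕ) : Matrix (Fin (s + 3)) (Fin (s + 3)) ℝ :=
  Matrix.of fun i j =>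
    if (i : ℕ) = 0 ∨ (j : ℕ) = 0 then -1
    else if (i : ℕ) = 1 ∨ (j : ℕ) = 1 then 0
    else if i = j then 0 else -1

open Matrix Finset Module

theorem le_card_pos_of_sum_mul_sq_pos {ι V : Type*} [Fintype ι] [AddCommGroup V] [Module ℝ V]
    [FiniteDimensional ℝ V] (d : ι → ℝ) (h : V →ₗ[ℝ] ι → ℝ)
    (hpos : ∀ x ≠ 0, 0 < ∑ i, d i * h x i ^ 2) :
    finrank ℝ V ≤ Nat.card {i // 0 < d i} := by
  let Φ : V →ₗ[ℝ] {i // 0 < d i} → ℝ := LinearMap.funLeft ℝ ℝ Subtype.val ∘ₗ h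
  have hΦ : Function.Injective Φ := by
    rw [← LinearMap.ker_eq_bot, LinearMap.ker_eq_bot']
    intro x hx
    by_contra hx0
    refine (hpos x hx0).not_ge (sum_nonpos fun i _ => ?_)
    by_cases hi : 0 < d i
    · simp [show h x i = 0 from congrFun hx ⟨i, hi⟩]
    · exact mul_nonpos_of_nonpos_of_nonneg (not_lt.mp hi) (sq_nonneg _)
  simpa using LinearMap.finrank_le_finrank_of_injective hΦ

theorem card_pos_add_card_neg_le {ι : Type*} [Fintype ι] (d : ι → ℝ) :
    Nat.card {i // 0 < d i} + Nat.card {i // d i < 0} ≤ Fintype.card ι := by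
  classical
  have hneg : Nat.card {i // d i < 0} ≤ Nat.card {i // ¬0 < d i} :=
    Nat.card_mono (Set.toFinite _) fun i hi => not_lt.mpr (le_of_lt hi)
  simp only [Nat.card_eq_fintype_card, Fintype.card_subtype_compl] at hneg ⊢
  have hpos := Fintype.card_subtype_le fun i => 0 < d i
  omega

namespace Matrix.IsHermitian

variable {n : Type*} [Fintype n] [DecidableEq n] {A : Matrix n n ℝ}

theorem dotProduct_mulVec_self_eq_sum (hA : A.IsHermitian) (x : n → ℝ) :
    x ⬝ᵥ A *ᵥ x =
      ∑ i, hA.eigenvalues i * ((star (hA.eigenvectorUnitary : Matrix n n ℝ)) *ᵥ x) i ^ 2 := by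
  conv_lhs => rw [hA.spectral_theorem, Unitary.conjStarAlgAut_apply, ← mulVec_mulVec,
    ← mulVec_mulVec, dotProduct_mulVec, ← mulVec_transpose,
    ← conjTranspose_eq_transpose_of_trivial, ← star_eq_conjTranspose]
  simp [dotProduct, mulVec_diagonal, sq, mul_left_comm]

theorem finrank_le_card_pos_eigenvalues {V : Type*} [AddCommGroup V] [Module ℝ V]
    [FiniteDimensional ℝ V] (hA : A.IsHermitian) (g : V →ₗ[ℝ] n → ℝ)
    (hg : ∀ x ≠ 0, 0 < g x ⬝ᵥ A *ᵥ g x) :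
    finrank ℝ V ≤ Nat.card {i // 0 < hA.eigenvalues i} :=
  le_card_pos_of_sum_mul_sq_pos _
    ((star (hA.eigenvectorUnitary : Matrix n n ℝ)).mulVecLin ∘ₗ g)
    fun x hx => by simpa [← hA.dotProduct_mulVec_self_eq_sum] using hg x hx

theorem finrank_le_card_neg_eigenvalues {V : Type*} [AddCommGroup V] [Module ℝ V]
    [FiniteDimensional ℝ V] (hA : A.IsHermitian) (g : V →ₗ[ℝ] n → ℝ)
    (hg : ∀ x ≠ 0, g x ⬝ᵥ A *ᵥ g x < 0) :
    finrank ℝ V ≤ Nat.card {i // hA.eigenvalues i < 0} := by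
  simpa using le_card_pos_of_sum_mul_sq_pos (-hA.eigenvalues)
    ((star (hA.eigenvectorUnitary : Matrix n n ℝ)).mulVecLin ∘ₗ g)
    fun x hx => by simpa [← hA.dotProduct_mulVec_self_eq_sum] using hg x hx

end Matrix.IsHermitian

namespace L7mat

theorem dotProduct_mulVec_vecCons (s : ℕ) (a b : ℝ) (w : Fin (s + 1) → ℝ) :
    vecCons a (vecCons b w) ⬝ᵥ L7mat s *ᵥ vecCons a (vecCons b w) =
      ∑ k, w k ^ 2 - (a + ∑ k, w k) ^ 2 - 2 * a * b := by
  have hblock : ∀ k, ∑ l, (if k = l then 0 else -w l) = w k - ∑ l, w l := fun k => by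
    have hsplit : ∀ l, (if k = l then 0 else -w l) = (if k = l then w l else 0) - w l := by
      intro l; split_ifs <;> ring
    simp only [hsplit, sum_sub_distrib, Fintype.sum_ite_eq]
  simp only [dotProduct, mulVec, Fin.sum_univ_succ (n := s + 2), Fin.sum_univ_succ (n := s + 1)]
  simp [L7mat, Fin.val_succ, Fin.succ_inj, hblock, mul_add, mul_sub, sum_add_distrib, ← sum_mul,
    sq]
  ring

noncomputable def posEmbedding (s : ℕ) : (Fin (s + 1) → ℝ) →ₗ[ℝ] Fin (s + 3) → ℝ :=
  LinearMap.vecCons (-∑ k, LinearMap.proj k)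
    (LinearMap.vecCons (∑ k, LinearMap.proj k) LinearMap.id)

noncomputable def negEmbedding (s : ℕ) : ℝ × ℝ →ₗ[ℝ] Fin (s + 3) → ℝ :=
  LinearMap.vecCons (LinearMap.fst ℝ ℝ ℝ)
    (LinearMap.vecCons (-(s + 1 : ℝ) • LinearMap.snd ℝ ℝ ℝ)
      (LinearMap.pi fun _ => LinearMap.snd ℝ ℝ ℝ))

theorem posEmbedding_apply (s : ℕ) (w : Fin (s + 1) → ℝ) :
    posEmbedding s w = vecCons (-∑ k, w k) (vecCons (∑ k, w k) w) := by
  simp [posEmbedding, LinearMap.vecCons_apply]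

theorem negEmbedding_apply (s : ℕ) (x : ℝ × ℝ) :
    negEmbedding s x = vecCons x.1 (vecCons (-(s + 1) * x.2) fun _ => x.2) := by
  rfl

theorem dotProduct_mulVec_posEmbedding_pos (s : ℕ) {w : Fin (s + 1) → ℝ} (hw : w ≠ 0) :
    0 < posEmbedding s w ⬝ᵥ L7mat s *ᵥ posEmbedding s w := by
  obtain ⟨k, hk⟩ := Function.ne_iff.mp hw
  have hsq : 0 < ∑ k, w k ^ 2 :=
    sum_pos' (fun k _ => sq_nonneg (w k)) ⟨k, mem_univ k, sq_pos_of_ne_zero hk⟩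
  rw [posEmbedding_apply, dotProduct_mulVec_vecCons]
  nlinarith [sq_nonneg (∑ k, w k)]

theorem dotProduct_mulVec_negEmbedding (s : ℕ) (a t : ℝ) :
    negEmbedding s (a, t) ⬝ᵥ L7mat s *ᵥ negEmbedding s (a, t) =
      -a ^ 2 - s * (s + 1) * t ^ 2 := by
  rw [negEmbedding_apply, dotProduct_mulVec_vecCons]
  simp only [sum_const, card_univ, Fintype.card_fin, nsmul_eq_mul]
  push_cast
  ring

theorem dotProduct_mulVec_negEmbedding_neg {s : ℕ} (hs : 1 ≤ s) {x : ℝ × ℝ}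
    (hx : x ≠ 0) :
    negEmbedding s x ⬝ᵥ L7mat s *ᵥ negEmbedding s x < 0 := by
  obtain ⟨a, t⟩ := x
  have hcoef : (0 : ℝ) < s * (s + 1) := mul_pos (Nat.cast_pos.mpr hs) (by positivity)
  have hat : a ≠ 0 ∨ t ≠ 0 := by
    by_contra! h
    exact hx (Prod.ext h.1 h.2)
  rw [dotProduct_mulVec_negEmbedding]
  rcases hat with ha | ht
  · nlinarith [sq_pos_of_ne_zero ha, mul_nonneg hcoef.le (sq_nonneg t)]
  · nlinarith [sq_nonneg a, mul_pos hcoef (sq_pos_of_ne_zero ht)]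

end L7mat

/-- For `q ≤ -1`, the signature of `L_{0,q,-1}` equals `|q| - 1`. -/
theorem signature_L_zero_q_minusone (q : ℤ) (hq : q ≤ -1)
    (hM : (L7mat q.natAbs).IsHermitian) :
    matrixSignature (L7mat q.natAbs) hM = (q.natAbs : ℤ) - 1 := by
  have hpos := hM.finrank_le_card_pos_eigenvalues (L7mat.posEmbedding q.natAbs)
    fun _ hw => L7mat.dotProduct_mulVec_posEmbedding_pos q.natAbs hw
  have hneg := hM.finrank_le_card_neg_eigenvalues (L7mat.negEmbedding q.natAbs)
    fun _ hx => L7mat.dotProduct_mulVec_negEmbedding_neg (by omega) hx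
  have htotal := card_pos_add_card_neg_le hM.eigenvalues
  simp only [finrank_fin_fun, finrank_prod, finrank_self, Fintype.card_fin] at hpos hneg htotal
  unfold matrixSignature
  omega
end

section
/- Let q ≤ −1 and let L_{−1,q,2} be the (|q|+5)×(|q|+5) linking matrix from the paper. The rational solution b of L_{−1,q,2} b = (1,1,0,…,0)ᵀ satisfies bᵀ L_{−1,q,2} b = 2|q|/(|q|+2). -/
/-!
With `s = |q|`, both `L12mat s` and `b12vec s` are constant on the three families of components (the two
`r`-components, the two `p`-components and the `s + 1` `q`-components), up to a diagonal
correction of the matrix. Hence `L12mat s *ᵥ b12vec s` is computed by a `3 × 3` calculation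
in which the `q`-family is weighted by its size `s + 1`, and then
`bᵀ L b = b ⬝ᵥ (1, 1, 0, …, 0) = 2 · s / (s + 2)`.
-/

/-- The `(|q|+5) × (|q|+5)` linking matrix `L_{-1,q,2}` of the framed link
`𝕃_{-1,q,2}`: the two components of the `r = 2` family (rows 1–2), the two
components of the `p = -1` family (rows 3–4, forming the block `A₁`), and the
`|q|+1` components of the `q`-family (forming the block `A_{|q|}`); all components
of the `p`- and `q`-families link both `r`-components once. -/
def L12mat (s : ℕ) : Matrix (Fin (s + 5)) (Fin (s + 5)) ℚ :=
  Matrix.of fun i j =>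
    if (i : ℕ) ≤ 1 ∧ (j : ℕ) ≤ 1 then (if i = j then -3 else -2)
    else if (i : ℕ) ≤ 1 ∨ (j : ℕ) ≤ 1 then -1
    else if (i : ℕ) ≤ 3 ∧ (j : ℕ) ≤ 3 then (if i = j then 0 else -1)
    else if (i : ℕ) ≤ 3 ∨ (j : ℕ) ≤ 3 then 0
    else if i = j then 0 else -1

/-- The rational solution `b` of `L_{-1,q,2} b = (1,1,0,…,0)ᵀ`, namely
`b = (|q|/(|q|+2), |q|/(|q|+2), -2|q|/(|q|+2), -2|q|/(|q|+2), -2/(|q|+2), …)`. -/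
def b12vec (s : ℕ) : Fin (s + 5) → ℚ := fun i =>
  if (i : ℕ) ≤ 1 then (s : ℚ) / (s + 2)
  else if (i : ℕ) ≤ 3 then -(2 * s) / (s + 2)
  else -2 / (s + 2)

/-- The rotation vector `(1,1,0,…,0)`. -/
def rot12vec (s : ℕ) : Fin (s + 5) → ℚ := fun i => if (i : ℕ) ≤ 1 then 1 else 0

open Matrix

namespace L12

/-- The family (`0 = r`, `1 = p`, `2 = q`) of the component indexed by `i`. -/
def family (s : ℕ) (i : Fin (s + 5)) : Fin 3 :=
  if (i : ℕ) ≤ 1 then 0 else if (i : ℕ) ≤ 3 then 1 else 2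

/-- The linking number of two distinct components, as a function of their families. -/
def linkBlock : Matrix (Fin 3) (Fin 3) ℚ := !![-2, -1, -1; -1, -1, 0; -1, 0, -1]

/-- Framing minus the linking number of two distinct components of the same family. -/
def diagShift : Fin 3 → ℚ := ![-1, 1, 1]

def bBlock (s : ℕ) : Fin 3 → ℚ := ![s / (s + 2), -(2 * s) / (s + 2), -2 / (s + 2)]

variable (s : ℕ)

theorem sum_comp_family (f : Fin 3 → ℚ) :
    ∑ i : Fin (s + 5), f (family s i) = 2 * f 0 + 2 * f 1 + (s + 1) * f 2 := by
  have family_q : ∀ i : Fin (s + 1), family s i.succ.succ.succ.succ = 2 := fun i => by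
    simp [family]
  rw [Fin.sum_univ_succ, Fin.sum_univ_succ, Fin.sum_univ_succ, Fin.sum_univ_succ]
  simp only [family_q, Finset.sum_const, Finset.card_univ, Fintype.card_fin, nsmul_eq_mul]
  simp [family, Fin.succ]
  ring

theorem L12mat_apply (i j : Fin (s + 5)) :
    L12mat s i j = linkBlock (family s i) (family s j) +
      if i = j then diagShift (family s i) else 0 := by
  rw [L12mat, Matrix.of_apply]
  unfold family
  by_cases hij : i = j
  · subst hij
    by_cases h1 : (i : ℕ) ≤ 1
    · simp [h1, linkBlock, diagShift]
      norm_num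
    · by_cases h3 : (i : ℕ) ≤ 3 <;> simp [h1, h3, linkBlock, diagShift]
  · have hij' : (i : ℕ) ≠ j := Fin.val_ne_of_ne hij
    simp only [if_neg hij, add_zero]
    split_ifs <;> simp [linkBlock] <;> omega

theorem b12vec_eq : b12vec s = bBlock s ∘ family s := by
  funext i
  simp only [b12vec, bBlock, family, Function.comp]
  split_ifs <;> simp

theorem rot12vec_eq : rot12vec s = ![1, 0, 0] ∘ family s := by
  funext i
  simp only [rot12vec, family, Function.comp]
  split_ifs <;> simp

theorem L12mat_mulVec_comp_family (β : Fin 3 → ℚ) (i : Fin (s + 5)) :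
    (L12mat s *ᵥ (β ∘ family s)) i =
      2 * linkBlock (family s i) 0 * β 0 + 2 * linkBlock (family s i) 1 * β 1 +
        (s + 1) * linkBlock (family s i) 2 * β 2 + diagShift (family s i) * β (family s i) := by
  simp only [mulVec, dotProduct, L12mat_apply, add_mul, Finset.sum_add_distrib, ite_mul,
    zero_mul, Finset.sum_ite_eq, Finset.mem_univ, if_true, Function.comp]
  rw [sum_comp_family s (fun k => linkBlock (family s i) k * β k)]
  ring

theorem L12mat_mulVec_b12vec : L12mat s *ᵥ b12vec s = rot12vec s := by
  have hs : (s : ℚ) + 2 ≠ 0 := by positivity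
  funext i
  rw [b12vec_eq, L12mat_mulVec_comp_family, rot12vec_eq, Function.comp_apply]
  generalize family s i = k
  fin_cases k <;> simp [linkBlock, diagShift, bBlock] <;> field_simp <;> ring

theorem b12vec_dotProduct_rot12vec : b12vec s ⬝ᵥ rot12vec s = 2 * s / (s + 2) := by
  rw [b12vec_eq, rot12vec_eq, dotProduct]
  simp only [Function.comp_apply]
  rw [sum_comp_family s (fun k => bBlock s k * ![1, 0, 0] k)]
  simp [bBlock]
  ring

end L12

theorem csquare_L_minusone_q_two_general (q : ℤ) :
    (L12mat q.natAbs).mulVec (b12vec q.natAbs) = rot12vec q.natAbs ∧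
      dotProduct (b12vec q.natAbs) ((L12mat q.natAbs).mulVec (b12vec q.natAbs)) =
        2 * (q.natAbs : ℚ) / ((q.natAbs : ℚ) + 2) := by
  rw [L12.L12mat_mulVec_b12vec]
  exact ⟨rfl, L12.b12vec_dotProduct_rot12vec _⟩

/-- For `q ≤ -1`, the rational solution `b` of `L_{-1,q,2} b = (1,1,0,…,0)ᵀ`
satisfies `bᵀ L_{-1,q,2} b = 2|q|/(|q|+2)`. -/
theorem csquare_L_minusone_q_two (q : ℤ) (hq : q ≤ -1) :
    (L12mat q.natAbs).mulVec (b12vec q.natAbs) = rot12vec q.natAbs ∧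
      dotProduct (b12vec q.natAbs) ((L12mat q.natAbs).mulVec (b12vec q.natAbs)) =
        2 * (q.natAbs : ℚ) / ((q.natAbs : ℚ) + 2) :=
  csquare_L_minusone_q_two_general q
end

section
/- Let q ≤ −4 and let L_{1,q,−2} be the (|q|+3)×(|q|+3) linking matrix from the paper. Then coker(L_{1,q,−2}) ≅ ℤ/(|q|−2), with μ₁ = μ₂ = −μ₃ in the cokernel, and the rational solution b of L_{1,q,−2} b = (1,1,0,…,0)ᵀ satisfies bᵀ L_{1,q,−2} b = −2|q|/(|q|−2). -/
/-- The `(|q|+3) × (|q|+3)` linking matrix `L_{1,q,-2}` (over a commutative ring `R`):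
two `-1`-framed components linking each other twice (rows 1–2) and linking each of the
`|q|+1` components of the `q`-family (which form the block `A_{|q|}`: zero diagonal,
`-1` off-diagonal) once. -/
def L13mat (R : Type*) [CommRing R] (s : ℕ) : Matrix (Fin (s + 3)) (Fin (s + 3)) R :=
  Matrix.of fun i j =>
    if (i : ℕ) ≤ 1 ∧ (j : ℕ) ≤ 1 then (if i = j then -1 else -2)
    else if (i : ℕ) ≤ 1 ∨ (j : ℕ) ≤ 1 then -1
    else if i = j then 0 else -1

/-- The rational solution `b = (-|q|/(|q|-2), -|q|/(|q|-2), 2/(|q|-2), …, 2/(|q|-2))`. -/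
def b13vec (s : ℕ) : Fin (s + 3) → ℚ := fun i =>
  if (i : ℕ) ≤ 1 then -(s : ℚ) / (s - 2) else 2 / ((s : ℚ) - 2)

/-- The rotation vector `(1,1,0,…,0)`. -/
def rot13vec (s : ℕ) : Fin (s + 3) → ℚ := fun i => if (i : ℕ) ≤ 1 then 1 else 0

/-! Write `c = (1, 1, -1, …, -1)` and `σ` for the transposition of the first two indices.
Row `i` of `L = L_{1,q,-2}` is `-𝟙 - c_i e_{σ i}`, so `L v = -(∑ v) 𝟙 - c ⊙ (v ∘ σ)`.
Applied to `e_{σ k} - e_1` this gives `μ_k = c_k μ_0`: the cokernel is cyclic, generated by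
`μ_0`, and the class of `w` is `(c ⬝ w) μ_0`. Since `L` is symmetric with `L c = (|q| - 2) 𝟙`,
the functional `c ⬝ ·` maps the image of `L` onto `(|q| - 2) ℤ`, so it identifies the cokernel
with `ℤ/(|q| - 2)`. The rational identities are direct computations with vectors that are
constant on the first two and on the remaining coordinates. -/

open Matrix

theorem AddMonoidHom.bijective_of_map_generator_eq_one {G : Type*} [AddCommGroup G] {d : ℕ}
    (φ : G →+ ZMod d) {g : G} (hgen : ∀ x, x ∈ AddSubgroup.zmultiples g)
    (hd : (d : ℤ) • g = 0) (hφ : φ g = 1) : Function.Bijective φ := by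
  have hφk : ∀ k : ℤ, φ (k • g) = k := fun k => by simp [hφ]
  refine ⟨(injective_iff_map_eq_zero φ).2 fun x hx => ?_, fun y => ?_⟩
  · obtain ⟨k, rfl⟩ := hgen x
    obtain ⟨m, rfl⟩ := (ZMod.intCast_zmod_eq_zero_iff_dvd k d).1 (by rwa [← hφk])
    dsimp only
    rw [mul_comm, mul_smul, hd, smul_zero]
  · obtain ⟨k, rfl⟩ := ZMod.intCast_surjective y
    exact ⟨k • g, hφk k⟩

namespace matrixCoker

variable {n : ℕ} (M : Matrix (Fin n) (Fin n) ℤ)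

theorem mk_mulVec_eq_zero (v : Fin n → ℤ) :
    (Submodule.Quotient.mk (M *ᵥ v) : matrixCoker M) = 0 :=
  (Submodule.Quotient.mk_eq_zero _).2 ⟨v, rfl⟩

theorem mk_single (i : Fin n) (a : ℤ) :
    (Submodule.Quotient.mk (Pi.single i a) : matrixCoker M) = a • mu M i := by
  rw [mu, ← Submodule.Quotient.mk_smul, ← Pi.single_smul', smul_eq_mul, mul_one]

theorem mk_eq_dotProduct_smul_mu {c : Fin n → ℤ} {i₀ : Fin n}
    (hμ : ∀ i, mu M i = c i • mu M i₀) (w : Fin n → ℤ) :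
    (Submodule.Quotient.mk w : matrixCoker M) = (c ⬝ᵥ w) • mu M i₀ := by
  calc (Submodule.Quotient.mk w : matrixCoker M)
      = (LinearMap.range M.mulVecLin).mkQ (∑ i, Pi.single i (w i)) := by
        rw [Finset.univ_sum_single]; rfl
    _ = ∑ i, w i • mu M i := by simp only [map_sum, Submodule.mkQ_apply, mk_single]
    _ = ∑ i, (w i * c i) • mu M i₀ := Finset.sum_congr rfl fun i _ => by rw [hμ i, smul_smul]
    _ = (c ⬝ᵥ w) • mu M i₀ := by rw [dotProduct_comm, dotProduct, Finset.sum_smul]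

theorem nonempty_addEquiv_zmod {c : Fin n → ℤ} {i₀ : Fin n} {d : ℕ}
    (hμ : ∀ i, mu M i = c i • mu M i₀) (hc : c i₀ = 1)
    (hdvd : ∀ v, (d : ℤ) ∣ c ⬝ᵥ (M *ᵥ v)) (hd : ∃ v, c ⬝ᵥ (M *ᵥ v) = d) :
    Nonempty (matrixCoker M ≃+ ZMod d) := by
  let f : (Fin n → ℤ) →ₗ[ℤ] ZMod d :=
    (Int.castAddHom (ZMod d)).toIntLinearMap ∘ₗ dotProductBilin ℤ ℤ c
  have hf : LinearMap.range M.mulVecLin ≤ LinearMap.ker f := by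
    rintro _ ⟨v, rfl⟩
    simpa [f, ZMod.intCast_zmod_eq_zero_iff_dvd] using hdvd v
  let φ := (LinearMap.range M.mulVecLin).liftQ f hf
  have hgen : ∀ x : matrixCoker M, x ∈ AddSubgroup.zmultiples (mu M i₀) := by
    rintro ⟨w⟩
    exact ⟨c ⬝ᵥ w, (mk_eq_dotProduct_smul_mu M hμ w).symm⟩
  have hdμ : (d : ℤ) • mu M i₀ = 0 := by
    obtain ⟨v, hv⟩ := hd
    rw [← hv, ← mk_eq_dotProduct_smul_mu M hμ, mk_mulVec_eq_zero]
  have hφ : φ (mu M i₀) = 1 := by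
    simp [φ, f, mu, dotProduct_single, hc]
  exact ⟨AddEquiv.ofBijective φ.toAddMonoidHom
    (φ.toAddMonoidHom.bijective_of_map_generator_eq_one hgen hdμ hφ)⟩

end matrixCoker

section blockVec
variable {R : Type*} (s : ℕ)

def blockVec (x y : R) : Fin (s + 3) → R := fun i => if (i : ℕ) ≤ 1 then x else y

theorem blockVec_swap (x y : R) (i : Fin (s + 3)) :
    blockVec s x y (Equiv.swap 0 1 i) = blockVec s x y i := by
  rcases eq_or_ne i 0 with rfl | h0
  · simp [blockVec]
  rcases eq_or_ne i 1 with rfl | h1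
  · simp [blockVec]
  rw [Equiv.swap_apply_of_ne_of_ne h0 h1]

theorem sum_blockVec [Semiring R] (x y : R) : ∑ i, blockVec s x y i = 2 * x + (s + 1) * y := by
  simp [blockVec, Fin.sum_univ_succ, Fin.val_succ, two_mul, add_assoc]

theorem blockVec_dotProduct_blockVec [Semiring R] (x y x' y' : R) :
    blockVec s x y ⬝ᵥ blockVec s x' y' = 2 * (x * x') + (s + 1) * (y * y') := by
  rw [← sum_blockVec]
  simp only [dotProduct, blockVec]
  congr 1; ext i; split_ifs <;> rfl

end blockVec

section L13mat

variable {R : Type*} [CommRing R] (s : ℕ)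

theorem L13mat_apply (i j : Fin (s + 3)) :
    L13mat R s i j = -1 - if j = Equiv.swap 0 1 i then blockVec s 1 (-1) i else 0 := by
  simp only [L13mat, of_apply, blockVec, Equiv.swap_apply_def]
  split_ifs <;> simp only [Fin.ext_iff, Fin.val_zero, Fin.val_one] at * <;>
    first | ring1 | (exfalso; omega)

theorem L13mat_transpose : (L13mat R s)ᵀ = L13mat R s := by
  ext i j
  simp only [transpose_apply, L13mat, of_apply]
  split_ifs <;> simp only [Fin.ext_iff] at * <;> omega

theorem L13mat_mulVec_apply (v : Fin (s + 3) → R) (i : Fin (s + 3)) :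
    (L13mat R s *ᵥ v) i = -∑ j, v j - blockVec s 1 (-1) i * v (Equiv.swap 0 1 i) := by
  simp only [mulVec, dotProduct, L13mat_apply, sub_mul, Finset.sum_sub_distrib, ite_mul,
    zero_mul, Finset.sum_ite_eq', Finset.mem_univ, if_true, neg_one_mul, Finset.sum_neg_distrib]

theorem L13mat_mulVec_blockVec (x y : R) :
    L13mat R s *ᵥ blockVec s x y =
      blockVec s (-(2 * x + (s + 1) * y) - x) (-(2 * x + (s + 1) * y) + y) := by
  ext i
  rw [L13mat_mulVec_apply, sum_blockVec, blockVec_swap]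
  simp only [blockVec]
  split_ifs <;> ring

theorem L13mat_mulVec_blockVec_one_neg_one :
    L13mat R s *ᵥ blockVec s 1 (-1) = fun _ => (s : R) - 2 := by
  ext i
  rw [L13mat_mulVec_blockVec]
  simp only [blockVec]
  split_ifs <;> ring

theorem blockVec_one_neg_one_dotProduct_L13mat_mulVec (v : Fin (s + 3) → R) :
    blockVec s 1 (-1) ⬝ᵥ (L13mat R s *ᵥ v) = ((s : R) - 2) * ∑ j, v j := by
  rw [dotProduct_mulVec, ← mulVec_transpose, L13mat_transpose,
    L13mat_mulVec_blockVec_one_neg_one, dotProduct, Finset.mul_sum]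

theorem L13mat_mulVec_single_swap_sub_single_one (k : Fin (s + 3)) :
    L13mat R s *ᵥ (Pi.single (Equiv.swap 0 1 k) 1 - Pi.single 1 1) =
      Pi.single 0 1 - Pi.single k (blockVec s 1 (-1) k) := by
  ext i
  rw [L13mat_mulVec_apply]
  simp only [Pi.sub_apply, Pi.single_apply, Finset.sum_sub_distrib, Finset.sum_ite_eq',
    Finset.mem_univ, ↓reduceIte, sub_self, neg_zero, EmbeddingLike.apply_eq_iff_eq,
    Equiv.swap_apply_eq_iff, Equiv.swap_apply_right, zero_sub]
  split_ifs <;> subst_vars <;> simp_all [blockVec]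

end L13mat

theorem mu_L13mat (s : ℕ) (k : Fin (s + 3)) :
    mu (L13mat ℤ s) k = blockVec s 1 (-1) k • mu (L13mat ℤ s) 0 := by
  have hk : blockVec s (1 : ℤ) (-1) k * blockVec s 1 (-1) k = 1 := by
    simp only [blockVec]; split_ifs <;> norm_num
  have h := matrixCoker.mk_mulVec_eq_zero (L13mat ℤ s)
    (Pi.single (Equiv.swap 0 1 k) 1 - Pi.single 1 1)
  rw [L13mat_mulVec_single_swap_sub_single_one, Submodule.Quotient.mk_sub,
    matrixCoker.mk_single, matrixCoker.mk_single, one_smul, sub_eq_zero] at h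
  rw [h, smul_smul, hk, one_smul]

theorem nonempty_matrixCoker_L13mat_addEquiv (s : ℕ) (hs : 2 ≤ s) :
    Nonempty (matrixCoker (L13mat ℤ s) ≃+ ZMod (s - 2)) := by
  have hd : ((s - 2 : ℕ) : ℤ) = (s : ℤ) - 2 := by omega
  refine matrixCoker.nonempty_addEquiv_zmod _ (mu_L13mat s) (by simp [blockVec])
    (fun v => ⟨∑ j, v j, ?_⟩) ⟨Pi.single 0 1, ?_⟩ <;>
    rw [blockVec_one_neg_one_dotProduct_L13mat_mulVec] <;> simp [hd]

theorem L13mat_mulVec_b13vec (s : ℕ) (hs : s ≠ 2) : L13mat ℚ s *ᵥ b13vec s = rot13vec s := by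
  have hs' : (s : ℚ) - 2 ≠ 0 := sub_ne_zero.mpr (by exact_mod_cast hs)
  change L13mat ℚ s *ᵥ blockVec s _ _ = blockVec s 1 0
  rw [L13mat_mulVec_blockVec]
  congr 1 <;> field_simp <;> ring

theorem b13vec_dotProduct_rot13vec (s : ℕ) :
    b13vec s ⬝ᵥ rot13vec s = -(2 * (s : ℚ)) / ((s : ℚ) - 2) := by
  change blockVec s _ _ ⬝ᵥ blockVec s _ _ = _
  rw [blockVec_dotProduct_blockVec]
  ring

/-- For `q ≤ -4`: the cokernel of `L_{1,q,-2}` is `ℤ/(|q|-2)` with `μ₁ = μ₂ = -μ₃`,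
and the rational solution `b` of `L_{1,q,-2} b = (1,1,0,…,0)ᵀ` satisfies
`bᵀ L_{1,q,-2} b = -2|q|/(|q|-2)`. -/
theorem coker_and_csquare_L_one_q_minustwo (q : ℤ) (hq : q ≤ -4) :
    Nonempty (matrixCoker (L13mat ℤ q.natAbs) ≃+ ZMod (q.natAbs - 2)) ∧
      mu (L13mat ℤ q.natAbs) 0 = mu (L13mat ℤ q.natAbs) 1 ∧
      mu (L13mat ℤ q.natAbs) 1 = -mu (L13mat ℤ q.natAbs) 2 ∧
      (L13mat ℚ q.natAbs).mulVec (b13vec q.natAbs) = rot13vec q.natAbs ∧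
      dotProduct (b13vec q.natAbs)
          ((L13mat ℚ q.natAbs).mulVec (b13vec q.natAbs)) =
        -(2 * (q.natAbs : ℚ)) / ((q.natAbs : ℚ) - 2) := by
  have hs : 4 ≤ q.natAbs := by omega
  have hb := L13mat_mulVec_b13vec q.natAbs (by omega)
  refine ⟨nonempty_matrixCoker_L13mat_addEquiv _ (by omega), ?_, ?_, hb, ?_⟩
  · simp [mu_L13mat _ 1, blockVec]
  · simp [mu_L13mat _ 1, mu_L13mat _ 2, blockVec, Nat.mod_eq_of_lt (by omega : 2 < q.natAbs + 3)]
  · rw [hb, b13vec_dotProduct_rot13vec]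
end

section
/- For integers p ≥ 2, q ≤ −2, r ≤ −2 with r(p+q) ≠ −pq, the abelian group G presented by generators μ₁, ν, λ and relations −(2|r|−1)μ₁ − (p−1)ν − (|q|+1)λ = 0, p·ν − |q|·λ = 0, −|r|·μ₁ − p·ν = 0 is finite, of order |det M| where M is the 3×3 relation matrix, and |det M| = |r·(p+q) + p·q| (up to sign as dictated by the substitutions |q| = −q, |r| = −r). -/
/-- The relation matrix of the presentation of `H₁(Y(p,q,r))` from Section 4 of the
paper (case `p ≥ 2`, `q ≤ -2`, `r ≤ -2`). -/
def M14 (p q r : ℤ) : Matrix (Fin 3) (Fin 3) ℤ :=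
  !![-(2 * |r| - 1), -(p - 1), -(|q| + 1);
     0, p, -|q|;
     -|r|, -p, 0]

namespace Matrix

variable {ι : Type*} [Fintype ι] [DecidableEq ι]

theorem natCard_quotient_range_mulVecLin (A : Matrix ι ι ℤ) (hA : A.det ≠ 0) :
    Nat.card ((ι → ℤ) ⧸ LinearMap.range A.mulVecLin) = A.det.natAbs := by
  let e := LinearEquiv.ofInjective A.mulVecLin (mulVec_injective_of_det_ne_zero hA)
  rw [← (LinearMap.range A.mulVecLin).natAbs_det_equiv e]
  congr 1
  exact LinearMap.det_toLin' A

theorem finite_quotient_range_mulVecLin (A : Matrix ι ι ℤ) (hA : A.det ≠ 0) :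
    Finite ((ι → ℤ) ⧸ LinearMap.range A.mulVecLin) :=
  Nat.finite_of_card_ne_zero <| by
    rw [natCard_quotient_range_mulVecLin A hA]
    exact Int.natAbs_ne_zero.mpr hA

end Matrix

theorem det_M14 {p q r : ℤ} (hq : q ≤ 0) (hr : r ≤ 0) :
    (M14 p q r).det = r * (p + q) + p * q := by
  rw [M14, abs_of_nonpos hq, abs_of_nonpos hr, Matrix.det_fin_three]
  simp only [Matrix.of_apply, Matrix.cons_val', Matrix.cons_val_zero, Matrix.cons_val_one,
    Matrix.cons_val_two, Matrix.empty_val', Matrix.cons_val_fin_one, Matrix.head_cons,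
    Matrix.tail_cons, Matrix.head_fin_const]
  ring

theorem H1_Ypqr_finite_general (p q r : ℤ) (hq : q ≤ -2) (hr : r ≤ -2)
    (h : r * (p + q) ≠ -(p * q)) :
    Finite (matrixCoker (M14 p q r)) ∧
      Nat.card (matrixCoker (M14 p q r)) = (M14 p q r).det.natAbs ∧
      (M14 p q r).det.natAbs = (r * (p + q) + p * q).natAbs := by
  have hdet : (M14 p q r).det = r * (p + q) + p * q := det_M14 (by omega) (by omega)
  have hne : (M14 p q r).det ≠ 0 := by
    rw [hdet]
    contrapose! h
    linarith
  exact ⟨Matrix.finite_quotient_range_mulVecLin _ hne,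
    Matrix.natCard_quotient_range_mulVecLin _ hne, by rw [hdet]⟩

/-- For `p ≥ 2`, `q ≤ -2`, `r ≤ -2` with `r(p+q) ≠ -pq`, the abelian group presented
by the relation matrix `M` is finite of order `|det M|`, and `|det M| = |r(p+q) + pq|`. -/
theorem H1_Ypqr_finite (p q r : ℤ) (hp : 2 ≤ p) (hq : q ≤ -2) (hr : r ≤ -2)
    (h : r * (p + q) ≠ -(p * q)) :
    Finite (matrixCoker (M14 p q r)) ∧
      Nat.card (matrixCoker (M14 p q r)) = (M14 p q r).det.natAbs ∧
      (M14 p q r).det.natAbs = (r * (p + q) + p * q).natAbs :=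
  H1_Ypqr_finite_general p q r hq hr h
end

section
/- For integers p ≥ 2, q ≤ −2, r ≤ −2 with p|q| + p|r| − |q||r| ≠ 0, the quantity c² arising from the linear system in Section 4 equals p|q||r| / (p|q| + p|r| − |q||r|). -/
/-- Which family the `i`-th link component belongs to: `0` for the `|r|` components of
the `r`-family, `1` for the `p-1` components of the `p`-family, `2` for the `|q|+1`
components of the `q`-family. -/
def fam15 (ar pp : ℕ) (i : ℕ) : ℕ :=
  if i < ar then 0 else if i < ar + (pp - 1) then 1 else 2

/-- The `(p+|q|+|r|) × (p+|q|+|r|)` linking matrix `L_{p,q,r}` of the framed link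
`𝕃_{p,q,r}` of Figure 4 (case `p ≥ 2`, `q ≤ -2`, `r ≤ -2`): the `|r|` components of the
`r`-family have framing `-1` and pairwise linking `-2`; the `p-1` components of the
`p`-family have framing `-2` and pairwise linking `-1`; the `|q|+1` components of the
`q`-family form the block `A_{|q|}` (zero diagonal, `-1` off-diagonal); each `p`- and
`q`-family component links each `r`-family component once, and the `p`- and `q`-families
do not link each other. -/
def L15mat (pp aq ar : ℕ) : Matrix (Fin (pp + aq + ar)) (Fin (pp + aq + ar)) ℚ :=
  Matrix.of fun i j =>
    if fam15 ar pp i = 0 ∧ fam15 ar pp j = 0 then (if i = j then -1 else -2)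
    else if fam15 ar pp i = 1 ∧ fam15 ar pp j = 1 then (if i = j then -2 else -1)
    else if fam15 ar pp i = 2 ∧ fam15 ar pp j = 2 then (if i = j then 0 else -1)
    else if fam15 ar pp i = 0 ∨ fam15 ar pp j = 0 then -1
    else 0

/-- The solution `b` of the linear system `L_{p,q,r} b = rot`, where `rot` has entry `1`
on the `r`-family components and `0` elsewhere. -/
def b15vec (pp aq ar : ℕ) : Fin (pp + aq + ar) → ℚ := fun i =>
  if fam15 ar pp (i : ℕ) = 0 then (pp * aq : ℚ) / (pp * aq + pp * ar - aq * ar)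
  else if fam15 ar pp (i : ℕ) = 1 then -(ar * aq : ℚ) / (pp * aq + pp * ar - aq * ar)
  else -(pp * ar : ℚ) / (pp * aq + pp * ar - aq * ar)

/-- The rotation vector: `1` on the `r`-family components, `0` elsewhere. -/
def rot15vec (pp aq ar : ℕ) : Fin (pp + aq + ar) → ℚ := fun i =>
  if fam15 ar pp (i : ℕ) = 0 then 1 else 0

/-!
The components of `𝕃_{p,q,r}` fall into three families, and `L_{p,q,r}` is constant on each
off-diagonal block and on the diagonal of each diagonal block. Hence `L_{p,q,r}` maps vectors that
are constant on families to vectors that are constant on families, and `L b = rot` reduces to a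
`3 × 3` linear system in the three family values, which the paper's explicit `b` solves. Then
`c² = bᵀ L b = bᵀ rot = |r| · b_r = p|q||r| / (p|q| + p|r| - |q||r|)`.
-/

open Matrix Finset

theorem mulVec_of_add_diagonal_comp {ι κ R : Type*} [Fintype ι] [DecidableEq ι]
    [NonUnitalNonAssocSemiring R] (g : ι → κ) (A : κ → κ → R) (d β : κ → R) (i : ι) :
    (((of fun i j => A (g i) (g j)) + diagonal (d ∘ g)) *ᵥ (β ∘ g)) i =
      ∑ j, A (g i) (g j) * β (g j) + d (g i) * β (g i) := by
  rw [add_mulVec, Pi.add_apply, mulVec_diagonal]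
  rfl

section Families

variable {ar pp aq : ℕ}

theorem fam15_of_lt {i : ℕ} (h : i < ar) : fam15 ar pp i = 0 := by
  simp [fam15, h]

theorem fam15_add_of_lt {i : ℕ} (h : i < pp - 1) : fam15 ar pp (ar + i) = 1 := by
  simp [fam15, h]

theorem fam15_add_add (i : ℕ) : fam15 ar pp (ar + (pp - 1) + i) = 2 := by
  simp [fam15]
  omega

theorem fam15_le_two (i : ℕ) : fam15 ar pp i ≤ 2 := by
  unfold fam15
  split_ifs <;> simp

theorem sum_comp_fam15 {R : Type*} [CommRing R] (hpp : 1 ≤ pp) (f : ℕ → R) :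
    ∑ j : Fin (pp + aq + ar), f (fam15 ar pp j) =
      ar * f 0 + (pp - 1) * f 1 + (aq + 1) * f 2 := by
  have hsize : pp + aq + ar = ar + (pp - 1) + (aq + 1) := by omega
  have r_family : ∑ i ∈ range ar, f (fam15 ar pp i) = ar * f 0 := by
    rw [sum_congr rfl fun i hi => by rw [fam15_of_lt (mem_range.1 hi)]]
    simp
  have p_family : ∑ i ∈ range (pp - 1), f (fam15 ar pp (ar + i)) = (pp - 1) * f 1 := by
    rw [sum_congr rfl fun i hi => by rw [fam15_add_of_lt (mem_range.1 hi)]]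
    simp [Nat.cast_sub hpp]
  have q_family :
      ∑ i ∈ range (aq + 1), f (fam15 ar pp (ar + (pp - 1) + i)) = (aq + 1) * f 2 := by
    simp [fam15_add_add]
  rw [Fin.sum_univ_eq_sum_range (fun j => f (fam15 ar pp j)), hsize, sum_range_add,
    sum_range_add, r_family, p_family, q_family]

end Families

/-- Off the diagonal, `L15mat` has entry `famLink a b` between components of families `a` and `b`;
on the diagonal, `famDiag a` adds the framing minus the linking number within family `a`. -/
def famLink : ℕ → ℕ → ℚ
  | 0, 0 => -2
  | 1, 1 => -1
  | 2, 2 => -1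
  | 0, _ => -1
  | _, 0 => -1
  | _, _ => 0

def famDiag : ℕ → ℚ
  | 1 => -1
  | _ => 1

def famSol (pp aq ar : ℕ) : ℕ → ℚ
  | 0 => pp * aq / (pp * aq + pp * ar - aq * ar)
  | 1 => -(ar * aq) / (pp * aq + pp * ar - aq * ar)
  | _ => -(pp * ar) / (pp * aq + pp * ar - aq * ar)

section LinkingMatrix

variable {pp aq ar : ℕ}

theorem L15mat_eq :
    L15mat pp aq ar =
      (of fun i j : Fin (pp + aq + ar) => famLink (fam15 ar pp i) (fam15 ar pp j)) +
        diagonal (famDiag ∘ fun i : Fin (pp + aq + ar) => fam15 ar pp i) := by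
  ext i j
  have hi := fam15_le_two (ar := ar) (pp := pp) i
  have hj := fam15_le_two (ar := ar) (pp := pp) j
  by_cases hij : i = j
  · subst hij
    interval_cases h : fam15 ar pp i <;> simp [L15mat, h, famLink, famDiag] <;> norm_num
  · interval_cases h : fam15 ar pp i <;> interval_cases h' : fam15 ar pp j <;>
      simp [L15mat, h, h', hij, famLink]

theorem b15vec_eq :
    b15vec pp aq ar = famSol pp aq ar ∘ fun i : Fin (pp + aq + ar) => fam15 ar pp i := by
  ext i
  have hi := fam15_le_two (ar := ar) (pp := pp) i
  interval_cases h : fam15 ar pp i <;> simp [b15vec, famSol, h]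

theorem famSol_reduced_system (hE : (pp : ℚ) * aq + pp * ar - aq * ar ≠ 0) {c : ℕ}
    (hc : c ≤ 2) :
    ar * (famLink c 0 * famSol pp aq ar 0) + (pp - 1) * (famLink c 1 * famSol pp aq ar 1) +
        (aq + 1) * (famLink c 2 * famSol pp aq ar 2) + famDiag c * famSol pp aq ar c =
      if c = 0 then 1 else 0 := by
  interval_cases c <;>
    simp only [famLink, famDiag, famSol, one_ne_zero, two_ne_zero, if_true, if_false]
  · refine Eq.trans ?_ (div_self hE)
    ring
  all_goals ring

theorem L15mat_mulVec_b15vec (hpp : 1 ≤ pp) (hE : (pp : ℚ) * aq + pp * ar - aq * ar ≠ 0) :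
    L15mat pp aq ar *ᵥ b15vec pp aq ar = rot15vec pp aq ar := by
  ext i
  rw [L15mat_eq, b15vec_eq, mulVec_of_add_diagonal_comp,
    sum_comp_fam15 hpp fun c => famLink (fam15 ar pp i) c * famSol pp aq ar c,
    famSol_reduced_system hE (fam15_le_two i)]
  rfl

theorem b15vec_dotProduct_rot15vec (hpp : 1 ≤ pp) :
    b15vec pp aq ar ⬝ᵥ rot15vec pp aq ar =
      ar * (pp * aq / (pp * aq + pp * ar - aq * ar)) := by
  rw [b15vec_eq, dotProduct]
  simp only [rot15vec, Function.comp_apply]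
  rw [sum_comp_fam15 hpp fun c => famSol pp aq ar c * if c = 0 then 1 else 0]
  simp [famSol]

end LinkingMatrix

theorem csquare_L_pqr_general (p q r : ℤ) (hp : 2 ≤ p)
    (hE : (p : ℚ) * |(q : ℚ)| + (p : ℚ) * |(r : ℚ)| - |(q : ℚ)| * |(r : ℚ)| ≠ 0) :
    (L15mat p.natAbs q.natAbs r.natAbs).mulVec
        (b15vec p.natAbs q.natAbs r.natAbs) = rot15vec p.natAbs q.natAbs r.natAbs ∧
      dotProduct (b15vec p.natAbs q.natAbs r.natAbs)
          ((L15mat p.natAbs q.natAbs r.natAbs).mulVec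
            (b15vec p.natAbs q.natAbs r.natAbs)) =
        (p : ℚ) * |(q : ℚ)| * |(r : ℚ)| /
          ((p : ℚ) * |(q : ℚ)| + (p : ℚ) * |(r : ℚ)| - |(q : ℚ)| * |(r : ℚ)|) := by
  have cast_natAbs (n : ℤ) : (n.natAbs : ℚ) = |(n : ℚ)| := by
    rw [Nat.cast_natAbs, Int.cast_abs]
  have cast_natAbs_p : (p.natAbs : ℚ) = p := by
    rw [cast_natAbs, abs_of_pos (by exact_mod_cast (by omega : 0 < p))]
  rw [← cast_natAbs_p, ← cast_natAbs q, ← cast_natAbs r] at hE ⊢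
  have hsys := L15mat_mulVec_b15vec (by omega) hE
  refine ⟨hsys, ?_⟩
  rw [hsys, b15vec_dotProduct_rot15vec (by omega)]
  ring

/-- For `p ≥ 2`, `q ≤ -2`, `r ≤ -2` with `p|q| + p|r| - |q||r| ≠ 0`, the quantity
`c² = bᵀ L_{p,q,r} b` arising from the linear system `L_{p,q,r} b = rot` equals
`p|q||r| / (p|q| + p|r| - |q||r|)`. -/
theorem csquare_L_pqr (p q r : ℤ) (hp : 2 ≤ p) (hq : q ≤ -2) (hr : r ≤ -2)
    (hE : (p : ℚ) * |(q : ℚ)| + (p : ℚ) * |(r : ℚ)| - |(q : ℚ)| * |(r : ℚ)| ≠ 0) :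
    (L15mat p.natAbs q.natAbs r.natAbs).mulVec
        (b15vec p.natAbs q.natAbs r.natAbs) = rot15vec p.natAbs q.natAbs r.natAbs ∧
      dotProduct (b15vec p.natAbs q.natAbs r.natAbs)
          ((L15mat p.natAbs q.natAbs r.natAbs).mulVec
            (b15vec p.natAbs q.natAbs r.natAbs)) =
        (p : ℚ) * |(q : ℚ)| * |(r : ℚ)| /
          ((p : ℚ) * |(q : ℚ)| + (p : ℚ) * |(r : ℚ)| - |(q : ℚ)| * |(r : ℚ)|) :=
  csquare_L_pqr_general p q r hp hE
end
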